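/- (Theorem 2, exact monotonicity of the EM-style iteration.) Let Y and Z be finite nonempty sets, let f : ℝ → ℝ be convex, and let p_E : Y → ℝ with p_E(y) > 0 for all y. Let (ρ_k)_{k∈ℕ} be a sequence of functions Z × Y → ℝ with ρ_k(z,y) > 0 for all (z,y), and define for each k the posterior kernel q^k(z|y) := ρ_k(z,y)/∑_{z'} ρ_k(z',y) and the loss L_k := D_f(ρ_k ‖ q^k⊗p_E) = ∑_{z,y} q^k(z|y)·p_E(y)·f( ρ_k(z,y)/(q^k(z|y)·p_E(y)) ). Suppose that each update does not increase the divergence against the current expert estimate, i.e. D_f(ρ_{k+1} ‖ q^k⊗p_E) ≤ D_f(ρ_k ‖ q^k⊗p_E) for every k. Then L_{k+1} ≤ L_k for every k; in particular the sequence of losses is nonincreasing. -/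

import Mathlib

/-!
Only the `y`-marginal of `ρ` matters for the loss: for the posterior kernel `q` of `ρ` every
ratio `ρ(z,y) / (q(z|y) p_E(y))` equals `ρ_Y(y) / p_E(y)`, so `L_k = D_f(ρ_{k,Y} ‖ p_E)`.
On the other hand, Jensen's inequality in each fibre gives `D_f(σ_Y ‖ p) ≤ D_f(σ ‖ q ⊗ p)` for
every strictly positive kernel `q`. Hence
`L_{k+1} = D_f(ρ_{k+1,Y} ‖ p_E) ≤ D_f(ρ_{k+1} ‖ q^k ⊗ p_E) ≤ D_f(ρ_k ‖ q^k ⊗ p_E) = L_k`.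
-/

noncomputable section

variable {X Y Z : Type} [Fintype X] [Fintype Y] [Fintype Z]

def fDiv (f : ℝ → ℝ) (ρ σ : X → ℝ) : ℝ := ∑ x, σ x * f (ρ x / σ x)

def kernelProd (q : Z → Y → ℝ) (p : Y → ℝ) : Z × Y → ℝ := fun x => q x.1 x.2 * p x.2

def marginal (ρ : Z × Y → ℝ) : Y → ℝ := fun y => ∑ z, ρ (z, y)

def posterior (ρ : Z × Y → ℝ) : Z → Y → ℝ := fun z y => ρ (z, y) / marginal ρ y

end

variable {X Y Z : Type}

theorem fDiv_kernelProd [Fintype Y] [Fintype Z] (f : ℝ → ℝ) (ρ : Z × Y → ℝ) (q : Z → Y → ℝ)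
    (p : Y → ℝ) :
    fDiv f ρ (kernelProd q p) = ∑ z, ∑ y, q z y * p y * f (ρ (z, y) / (q z y * p y)) :=
  Fintype.sum_prod_type _

theorem sum_posterior [Fintype Z] {ρ : Z × Y → ℝ} {y : Y} (hy : marginal ρ y ≠ 0) :
    ∑ z, posterior ρ z y = 1 := by
  simp only [posterior, ← Finset.sum_div]
  exact div_self hy

theorem marginal_pos [Fintype Z] [Nonempty Z] {ρ : Z × Y → ℝ} (hρ : ∀ x, 0 < ρ x) (y : Y) :
    0 < marginal ρ y :=
  Finset.sum_pos (fun z _ => hρ (z, y)) Finset.univ_nonempty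

theorem posterior_pos [Fintype Z] [Nonempty Z] {ρ : Z × Y → ℝ} (hρ : ∀ x, 0 < ρ x)
    (z : Z) (y : Y) : 0 < posterior ρ z y :=
  div_pos (hρ (z, y)) (marginal_pos hρ y)

theorem fDiv_kernelProd_posterior [Fintype Y] [Fintype Z] (f : ℝ → ℝ) {ρ : Z × Y → ℝ}
    (p : Y → ℝ) (hρ : ∀ y, marginal ρ y ≠ 0) :
    fDiv f ρ (kernelProd (posterior ρ) p) = fDiv f (marginal ρ) p := by
  rw [fDiv_kernelProd, Finset.sum_comm]
  refine Finset.sum_congr rfl fun y _ => ?_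
  have hterm : ∀ z, posterior ρ z y * p y * f (ρ (z, y) / (posterior ρ z y * p y))
      = posterior ρ z y * (p y * f (marginal ρ y / p y)) := by
    intro z
    by_cases hz : ρ (z, y) = 0
    · simp [posterior, hz]
    · have harg : ρ (z, y) / (posterior ρ z y * p y) = marginal ρ y / p y := by
        simp only [posterior]
        field_simp [hρ y]
      rw [harg, mul_assoc]
  rw [Finset.sum_congr rfl fun z _ => hterm z, ← Finset.sum_mul, sum_posterior (hρ y), one_mul]

theorem ConvexOn.map_sum_le_sum_mul_div [Fintype X] {f : ℝ → ℝ} (hf : ConvexOn ℝ Set.univ f)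
    {w : X → ℝ} (hw : ∀ x, 0 < w x) (hw1 : ∑ x, w x = 1) (a : X → ℝ) :
    f (∑ x, a x) ≤ ∑ x, w x * f (a x / w x) := by
  have hwa : ∀ x, w x * (a x / w x) = a x := fun x => mul_div_cancel₀ _ (hw x).ne'
  simpa [hwa] using
    hf.map_sum_le (t := Finset.univ) (p := fun x => a x / w x)
      (fun x _ => (hw x).le) hw1 (fun x _ => Set.mem_univ _)

theorem fDiv_marginal_le [Fintype Y] [Fintype Z] {f : ℝ → ℝ} (hf : ConvexOn ℝ Set.univ f)
    (σ : Z × Y → ℝ) {q : Z → Y → ℝ} (hq : ∀ z y, 0 < q z y) (hq1 : ∀ y, ∑ z, q z y = 1)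
    {p : Y → ℝ} (hp : ∀ y, 0 < p y) :
    fDiv f (marginal σ) p ≤ fDiv f σ (kernelProd q p) := by
  rw [fDiv_kernelProd, Finset.sum_comm]
  refine Finset.sum_le_sum fun y _ => ?_
  have hjensen : f (marginal σ y / p y) ≤ ∑ z, q z y * f (σ (z, y) / p y / q z y) := by
    simpa only [marginal, Finset.sum_div] using
      hf.map_sum_le_sum_mul_div (fun z => hq z y) (hq1 y) (fun z => σ (z, y) / p y)
  calc p y * f (marginal σ y / p y)
      ≤ p y * ∑ z, q z y * f (σ (z, y) / p y / q z y) :=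
        mul_le_mul_of_nonneg_left hjensen (hp y).le
    _ = ∑ z, q z y * p y * f (σ (z, y) / (q z y * p y)) := by
        rw [Finset.mul_sum]
        refine Finset.sum_congr rfl fun z _ => ?_
        rw [div_div, mul_comm (p y) (q z y)]
        ring

theorem em_iteration_monotone_general
    {Y Z : Type} [Fintype Y] [Fintype Z] [Nonempty Z]
    (f : ℝ → ℝ) (hf : ConvexOn ℝ Set.univ f)
    (pE : Y → ℝ) (hpE : ∀ y, 0 < pE y)
    (ρ : ℕ → Z × Y → ℝ) (hρ : ∀ k z y, 0 < ρ k (z, y))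
    (hstep : ∀ k : ℕ,
      (∑ z : Z, ∑ y : Y,
        (ρ k (z, y) / ∑ z' : Z, ρ k (z', y)) * pE y *
          f (ρ (k + 1) (z, y) / ((ρ k (z, y) / ∑ z' : Z, ρ k (z', y)) * pE y)))
      ≤ (∑ z : Z, ∑ y : Y,
        (ρ k (z, y) / ∑ z' : Z, ρ k (z', y)) * pE y *
          f (ρ k (z, y) / ((ρ k (z, y) / ∑ z' : Z, ρ k (z', y)) * pE y)))) :
    ∀ k : ℕ,
      (∑ z : Z, ∑ y : Y,
        (ρ (k + 1) (z, y) / ∑ z' : Z, ρ (k + 1) (z', y)) * pE y *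
          f (ρ (k + 1) (z, y) / ((ρ (k + 1) (z, y) / ∑ z' : Z, ρ (k + 1) (z', y)) * pE y)))
      ≤ (∑ z : Z, ∑ y : Y,
        (ρ k (z, y) / ∑ z' : Z, ρ k (z', y)) * pE y *
          f (ρ k (z, y) / ((ρ k (z, y) / ∑ z' : Z, ρ k (z', y)) * pE y))) := by
  intro k
  have hpos : ∀ m, ∀ x, 0 < ρ m x := fun m x => hρ m x.1 x.2
  have hmono : fDiv f (ρ (k + 1)) (kernelProd (posterior (ρ (k + 1))) pE)
      ≤ fDiv f (ρ k) (kernelProd (posterior (ρ k)) pE) :=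
    calc _ = fDiv f (marginal (ρ (k + 1))) pE :=
          fDiv_kernelProd_posterior f pE fun y => (marginal_pos (hpos (k + 1)) y).ne'
      _ ≤ fDiv f (ρ (k + 1)) (kernelProd (posterior (ρ k)) pE) :=
        fDiv_marginal_le hf _ (posterior_pos (hpos k))
          (fun y => sum_posterior (marginal_pos (hpos k) y).ne') hpE
      _ ≤ _ := by
        rw [fDiv_kernelProd, fDiv_kernelProd]
        exact hstep k
  rw [fDiv_kernelProd, fDiv_kernelProd] at hmono
  exact hmono

/-- **Theorem 2, exact monotonicity of the EM-style iteration.** Let `Y`,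
`Z` be finite nonempty sets, `f : ℝ → ℝ` convex, `p_E : Y → ℝ` strictly positive, and let
`(ρ_k)` be a sequence of strictly positive functions `Z × Y → ℝ`. Define for each `k` the
posterior kernel `q^k(z|y) := ρ_k(z,y)/∑_{z'} ρ_k(z',y)` and the loss
`L_k := D_f(ρ_k ‖ q^k⊗p_E)`. If each update does not increase the divergence against the
current expert estimate, i.e. `D_f(ρ_{k+1} ‖ q^k⊗p_E) ≤ D_f(ρ_k ‖ q^k⊗p_E)` for all `k`,
then `L_{k+1} ≤ L_k` for all `k`. -/
theorem em_iteration_monotone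
    {Y Z : Type} [Fintype Y] [Nonempty Y] [Fintype Z] [Nonempty Z]
    (f : ℝ → ℝ) (hf : ConvexOn ℝ Set.univ f)
    (pE : Y → ℝ) (hpE : ∀ y, 0 < pE y)
    (ρ : ℕ → Z × Y → ℝ) (hρ : ∀ k z y, 0 < ρ k (z, y))
    (hstep : ∀ k : ℕ,
      (∑ z : Z, ∑ y : Y,
        (ρ k (z, y) / ∑ z' : Z, ρ k (z', y)) * pE y *
          f (ρ (k + 1) (z, y) / ((ρ k (z, y) / ∑ z' : Z, ρ k (z', y)) * pE y)))
      ≤ (∑ z : Z, ∑ y : Y,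
        (ρ k (z, y) / ∑ z' : Z, ρ k (z', y)) * pE y *
          f (ρ k (z, y) / ((ρ k (z, y) / ∑ z' : Z, ρ k (z', y)) * pE y)))) :
    ∀ k : ℕ,
      (∑ z : Z, ∑ y : Y,
        (ρ (k + 1) (z, y) / ∑ z' : Z, ρ (k + 1) (z', y)) * pE y *
          f (ρ (k + 1) (z, y) / ((ρ (k + 1) (z, y) / ∑ z' : Z, ρ (k + 1) (z', y)) * pE y)))
      ≤ (∑ z : Z, ∑ y : Y,
        (ρ k (z, y) / ∑ z' : Z, ρ k (z', y)) * pE y *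
          f (ρ k (z, y) / ((ρ k (z, y) / ∑ z' : Z, ρ k (z', y)) * pE y))) :=
  em_iteration_monotone_general f hf pE hpE ρ hρ hstep
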